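/- arXiv:2605.11059 — 2 statements merged into one kernel-verified Lean document; each statement's English description precedes it below -/
import Mathlib

section
/- Let R₁ > 0 and let μ be a Borel probability measure on ℝ^d supported in the closed ball B̄(R₁). Then for every z ∈ ℝ^d the map z ↦ γ(z, μ) is Fréchet differentiable at z, and its derivative applied to a direction h ∈ ℝ^d equals D_zγ(z, μ)(h) = (∫∫ ⟨h, y₁ − y₂⟩ · y₁ · exp(⟨z, y₁⟩ + ⟨z, y₂⟩) dμ(y₁) dμ(y₂)) / γ₂(z, μ)². -/
open MeasureTheory
open scoped RealInnerProductSpace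

/-- The normalisation constant `γ₂(z, μ) = ∫ exp⟨z,y⟩ dμ(y)`. -/
noncomputable def gamma2 {d : ℕ} (z : EuclideanSpace ℝ (Fin d))
    (μ : Measure (EuclideanSpace ℝ (Fin d))) : ℝ :=
  ∫ y, Real.exp ⟪z, y⟫ ∂μ

/-- The attention map `γ(z, μ) = (∫ exp⟨z,y⟩ • y dμ(y)) / γ₂(z, μ)`. -/
noncomputable def gammaAttn {d : ℕ} (z : EuclideanSpace ℝ (Fin d))
    (μ : Measure (EuclideanSpace ℝ (Fin d))) : EuclideanSpace ℝ (Fin d) :=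
  (gamma2 z μ)⁻¹ • ∫ y, Real.exp ⟪z, y⟫ • y ∂μ

/-! Since `μ` is carried by a compact set, every continuous function of `y` is `μ`-integrable,
and for `w` near `z` the derivative of `w ↦ exp ⟪w, y⟫ • g y` is dominated by a continuous
function of `y`. So `γ₂` and the numerator `N(w) = ∫ exp ⟪w, y⟫ • y dμ` can be differentiated
under the integral sign: `Dγ₂(h) = ∫ exp ⟪z, y⟫ ⟪y, h⟫ dμ` and
`DN(h) = ∫ exp ⟪z, y⟫ ⟪y, h⟫ • y dμ`. As `γ₂ > 0`, the quotient rule gives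
`Dγ(h) = (γ₂ • DN(h) - Dγ₂(h) • N) / γ₂²`, and expanding `⟪h, y₁ - y₂⟫` shows that the double
integral equals `γ₂ • DN(h) - Dγ₂(h) • N`. -/

open Real

theorem Continuous.integrable_of_ae_mem_isCompact {X G : Type*} [MeasurableSpace X]
    [TopologicalSpace X] [OpensMeasurableSpace X] [T2Space X] [NormedAddCommGroup G]
    {μ : Measure X} [IsFiniteMeasure μ] {K : Set X} {f : X → G} (hf : Continuous f)
    (hK : IsCompact K) (hμK : ∀ᵐ x ∂μ, x ∈ K) : Integrable f μ := by
  rw [← Measure.restrict_eq_self_of_ae_mem hμK]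
  exact hf.continuousOn.integrableOn_compact hK

section

variable {E F : Type*} [NormedAddCommGroup E] [InnerProductSpace ℝ E]
  [NormedAddCommGroup F] [NormedSpace ℝ F]

theorem hasFDerivAt_exp_inner_smul (y : E) (v : F) (x : E) :
    HasFDerivAt (fun w => exp ⟪w, y⟫ • v) ((exp ⟪x, y⟫ • innerSL ℝ y).smulRight v) x := by
  have hinner : HasFDerivAt (fun w => ⟪w, y⟫) (innerSL ℝ y) x := by
    convert (innerSL ℝ y).hasFDerivAt using 1
    exact funext fun w => real_inner_comm y w
  exact hinner.exp.smul_const v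

theorem real_inner_le_of_mem_ball_one {x z : E} (hx : x ∈ Metric.ball z 1) (y : E) :
    ⟪x, y⟫ ≤ (‖z‖ + 1) * ‖y‖ := by
  have hxz : ‖x‖ ≤ ‖z‖ + 1 := by
    have := norm_le_norm_add_norm_sub' x z
    rw [Metric.mem_ball, dist_eq_norm] at hx
    linarith
  exact (real_inner_le_norm x y).trans (by gcongr)

variable [MeasurableSpace E] [BorelSpace E] {μ : Measure E} [IsFiniteMeasure μ] {K : Set E}

theorem hasFDerivAt_integral_exp_inner_smul {g : E → F} (hg : Continuous g) (hK : IsCompact K)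
    (hμK : ∀ᵐ y ∂μ, y ∈ K) (z : E) :
    ∃ L : E →L[ℝ] F, HasFDerivAt (fun w => ∫ y, exp ⟪w, y⟫ • g y ∂μ) L z ∧
      ∀ h, L h = ∫ y, (exp ⟪z, y⟫ * ⟪y, h⟫) • g y ∂μ := by
  have hF' : Continuous fun y => (exp ⟪z, y⟫ • innerSL ℝ y).smulRight (g y) := by
    fun_prop
  refine ⟨_, hasFDerivAt_integral_of_dominated_of_fderiv_le
    (F' := fun x y => (exp ⟪x, y⟫ • innerSL ℝ y).smulRight (g y))
    (bound := fun y => exp ((‖z‖ + 1) * ‖y‖) * ‖y‖ * ‖g y‖)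
    (Metric.ball_mem_nhds z one_pos) ?_ ?_ ?_ ?_ ?_ ?_, fun h => ?_⟩
  · exact .of_forall fun x =>
      ((by fun_prop : Continuous fun y => exp ⟪x, y⟫ • g y).integrable_of_ae_mem_isCompact
        hK hμK).aestronglyMeasurable
  · exact (by fun_prop : Continuous fun y => exp ⟪z, y⟫ • g y).integrable_of_ae_mem_isCompact
      hK hμK
  · exact (hF'.integrable_of_ae_mem_isCompact hK hμK).aestronglyMeasurable
  · refine .of_forall fun y x hx => ?_
    rw [ContinuousLinearMap.norm_smulRight_apply, norm_smul, innerSL_apply_norm,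
      norm_of_nonneg (exp_pos _).le]
    gcongr
    exact real_inner_le_of_mem_ball_one hx y
  · exact (by fun_prop : Continuous fun y => exp ((‖z‖ + 1) * ‖y‖) * ‖y‖ * ‖g y‖
      ).integrable_of_ae_mem_isCompact hK hμK
  · exact .of_forall fun y x _ => hasFDerivAt_exp_inner_smul y (g y) x
  · rw [ContinuousLinearMap.integral_apply (hF'.integrable_of_ae_mem_isCompact hK hμK)]
    simp only [ContinuousLinearMap.smulRight_apply, smul_apply,
      innerSL_apply_apply, smul_eq_mul, real_inner_comm h]

theorem integral_integral_inner_sub_mul_exp_smul [CompleteSpace E] (hK : IsCompact K)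
    (hμK : ∀ᵐ y ∂μ, y ∈ K) (z h : E) :
    ∫ y₁, ∫ y₂, (⟪h, y₁ - y₂⟫ * exp (⟪z, y₁⟫ + ⟪z, y₂⟫)) • y₁ ∂μ ∂μ =
      (∫ y, exp ⟪z, y⟫ ∂μ) • ∫ y, (exp ⟪z, y⟫ * ⟪y, h⟫) • y ∂μ -
        (∫ y, exp ⟪z, y⟫ * ⟪y, h⟫ ∂μ) • ∫ y, exp ⟪z, y⟫ • y ∂μ := by
  have hZ : Integrable (fun y => exp ⟪z, y⟫) μ :=
    (by fun_prop : Continuous _).integrable_of_ae_mem_isCompact hK hμK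
  have hI : Integrable (fun y => exp ⟪z, y⟫ * ⟪y, h⟫) μ :=
    (by fun_prop : Continuous _).integrable_of_ae_mem_isCompact hK hμK
  have hV : Integrable (fun y => (exp ⟪z, y⟫ * ⟪y, h⟫) • y) μ :=
    (by fun_prop : Continuous _).integrable_of_ae_mem_isCompact hK hμK
  have hN : Integrable (fun y => exp ⟪z, y⟫ • y) μ :=
    (by fun_prop : Continuous _).integrable_of_ae_mem_isCompact hK hμK
  have hinner (y₁ : E) :
      ∫ y₂, (⟪h, y₁ - y₂⟫ * exp (⟪z, y₁⟫ + ⟪z, y₂⟫)) • y₁ ∂μ =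
        (∫ y, exp ⟪z, y⟫ ∂μ) • (exp ⟪z, y₁⟫ * ⟪y₁, h⟫) • y₁ -
          (∫ y, exp ⟪z, y⟫ * ⟪y, h⟫ ∂μ) • exp ⟪z, y₁⟫ • y₁ := by
    have hpt : (fun y₂ => ⟪h, y₁ - y₂⟫ * exp (⟪z, y₁⟫ + ⟪z, y₂⟫)) = fun y₂ =>
        exp ⟪z, y₁⟫ * ⟪y₁, h⟫ * exp ⟪z, y₂⟫ - exp ⟪z, y₁⟫ * (exp ⟪z, y₂⟫ * ⟪y₂, h⟫) := by
      ext y₂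
      rw [inner_sub_right, exp_add, real_inner_comm h, real_inner_comm h]
      ring
    rw [integral_smul_const, hpt, integral_sub (hZ.const_mul _) (hI.const_mul _),
      integral_const_mul, integral_const_mul]
    module
  simp_rw [hinner]
  rw [integral_sub (by fun_prop) (by fun_prop), integral_smul, integral_smul]

end

section

variable {d : ℕ} {μ : Measure (EuclideanSpace ℝ (Fin d))} [IsFiniteMeasure μ]
  {K : Set (EuclideanSpace ℝ (Fin d))}

theorem gamma2_pos [NeZero μ] (hK : IsCompact K) (hμK : ∀ᵐ y ∂μ, y ∈ K)
    (z : EuclideanSpace ℝ (Fin d)) : 0 < gamma2 z μ :=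
  integral_exp_pos ((by fun_prop : Continuous _).integrable_of_ae_mem_isCompact hK hμK)

theorem hasFDerivAt_gamma2 (hK : IsCompact K) (hμK : ∀ᵐ y ∂μ, y ∈ K)
    (z : EuclideanSpace ℝ (Fin d)) :
    ∃ L : EuclideanSpace ℝ (Fin d) →L[ℝ] ℝ, HasFDerivAt (gamma2 · μ) L z ∧
      ∀ h, L h = ∫ y, exp ⟪z, y⟫ * ⟪y, h⟫ ∂μ := by
  simpa only [gamma2, smul_eq_mul, mul_one] using
    hasFDerivAt_integral_exp_inner_smul (g := fun _ => (1 : ℝ)) continuous_const hK hμK z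

theorem hasFDerivAt_gammaAttn [NeZero μ] (hK : IsCompact K) (hμK : ∀ᵐ y ∂μ, y ∈ K)
    (z : EuclideanSpace ℝ (Fin d)) :
    ∃ L : EuclideanSpace ℝ (Fin d) →L[ℝ] EuclideanSpace ℝ (Fin d),
      HasFDerivAt (gammaAttn · μ) L z ∧ ∀ h, L h = (gamma2 z μ ^ 2)⁻¹ •
        (gamma2 z μ • ∫ y, (exp ⟪z, y⟫ * ⟪y, h⟫) • y ∂μ -
          (∫ y, exp ⟪z, y⟫ * ⟪y, h⟫ ∂μ) • ∫ y, exp ⟪z, y⟫ • y ∂μ) := by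
  obtain ⟨L₁, hL₁, hL₁h⟩ := hasFDerivAt_integral_exp_inner_smul continuous_id hK hμK z
  obtain ⟨L₂, hL₂, hL₂h⟩ := hasFDerivAt_gamma2 hK hμK z
  have hpos := gamma2_pos hK hμK z
  refine ⟨_, ((hasDerivAt_inv hpos.ne').comp_hasFDerivAt z hL₂).smul hL₁, fun h => ?_⟩
  simp only [add_apply, smul_apply, Function.comp_apply, ContinuousLinearMap.smulRight_apply,
    smul_eq_mul, hL₁h, hL₂h, id]
  match_scalars <;> field_simp

end

theorem stmt_3_general {d : ℕ} (R₁ : ℝ)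
    (μ : Measure (EuclideanSpace ℝ (Fin d))) [IsProbabilityMeasure μ]
    (hsupp : μ (Metric.closedBall 0 R₁) = 1)
    (z : EuclideanSpace ℝ (Fin d)) :
    DifferentiableAt ℝ (fun w => gammaAttn w μ) z ∧
      ∀ h : EuclideanSpace ℝ (Fin d),
        fderiv ℝ (fun w => gammaAttn w μ) z h =
          ((gamma2 z μ) ^ 2)⁻¹ •
            ∫ y₁, ∫ y₂, (⟪h, y₁ - y₂⟫ * Real.exp (⟪z, y₁⟫ + ⟪z, y₂⟫)) • y₁ ∂μ ∂μ := by
  have hK := isCompact_closedBall (0 : EuclideanSpace ℝ (Fin d)) R₁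
  have hμK : ∀ᵐ y ∂μ, y ∈ Metric.closedBall 0 R₁ :=
    (mem_ae_iff_prob_eq_one measurableSet_closedBall).mpr hsupp
  obtain ⟨L, hL, hLh⟩ := hasFDerivAt_gammaAttn hK hμK z
  refine ⟨hL.differentiableAt, fun h => ?_⟩
  rw [hL.fderiv, hLh, integral_integral_inner_sub_mul_exp_smul hK hμK]
  rfl

/-- If `μ` is a probability measure supported in `B̄(R₁)`, then `z ↦ γ(z,μ)` is Fréchet
differentiable at every `z`, with derivative in direction `h` given by
`γ₂(z,μ)⁻² • ∫∫ ⟨h, y₁ − y₂⟩ exp(⟨z,y₁⟩ + ⟨z,y₂⟩) • y₁ dμ(y₁) dμ(y₂)`. -/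
theorem stmt_3 {d : ℕ} (R₁ : ℝ) (hR₁ : 0 < R₁)
    (μ : Measure (EuclideanSpace ℝ (Fin d))) [IsProbabilityMeasure μ]
    (hsupp : μ (Metric.closedBall 0 R₁) = 1)
    (z : EuclideanSpace ℝ (Fin d)) :
    DifferentiableAt ℝ (fun w => gammaAttn w μ) z ∧
      ∀ h : EuclideanSpace ℝ (Fin d),
        fderiv ℝ (fun w => gammaAttn w μ) z h =
          ((gamma2 z μ) ^ 2)⁻¹ •
            ∫ y₁, ∫ y₂, (⟪h, y₁ - y₂⟫ * Real.exp (⟪z, y₁⟫ + ⟪z, y₂⟫)) • y₁ ∂μ ∂μ :=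
  stmt_3_general R₁ μ hsupp z
end

section
/- Let R₁, R₂, β > 0, let m be a Borel probability measure on ℝ^d supported in B̄(R₁), let x ∈ B̄(R₁), and let θ = (θ_Q, θ_K, θ_V, θ_O) and ϑ = (ϑ_Q, ϑ_K, ϑ_V, ϑ_O) be parameters in 𝔖(R₂). Then ‖θ_Oᵀ θ_V γ(β θ_Kᵀ θ_Q x, m) − ϑ_Oᵀ ϑ_V γ(β ϑ_Kᵀ ϑ_Q x, m)‖ ≤ 2 R₁ R₂ · max(1, 2β R₁² R₂²) · ‖θ − ϑ‖_F, where ‖θ − ϑ‖_F denotes the square root of the sum of the squared Frobenius norms of the four block differences. -/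
open MeasureTheory
open scoped RealInnerProductSpace

open Matrix


/-- Matrices carry the product (Borel) measurable structure. -/
noncomputable instance matrixMeasurableSpace {k d : ℕ} :
    MeasurableSpace (Matrix (Fin k) (Fin d) ℝ) :=
  (inferInstance : MeasurableSpace (Fin k → Fin d → ℝ))

/-- A transformer parameter `θ = (θ_Q, θ_K, θ_V, θ_O)`, four `k × d` real matrices. -/
abbrev Param (k d : ℕ) : Type :=
  Matrix (Fin k) (Fin d) ℝ × Matrix (Fin k) (Fin d) ℝ ×
    Matrix (Fin k) (Fin d) ℝ × Matrix (Fin k) (Fin d) ℝ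

/-- Frobenius norm of a matrix. -/
noncomputable def frobNorm {k d : ℕ} (A : Matrix (Fin k) (Fin d) ℝ) : ℝ :=
  Real.sqrt (∑ i, ∑ j, (A i j) ^ 2)

/-- `𝔖(R)`: the set of parameters each of whose four blocks has Frobenius norm at most `R`. -/
def paramBall (k d : ℕ) (R : ℝ) : Set (Param k d) :=
  {θ | frobNorm θ.1 ≤ R ∧ frobNorm θ.2.1 ≤ R ∧ frobNorm θ.2.2.1 ≤ R ∧ frobNorm θ.2.2.2 ≤ R}

/-- A single attention head: `θ_Oᵀ θ_V γ(β θ_Kᵀ θ_Q x, m)`. -/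
noncomputable def attnHead {k d : ℕ} (β : ℝ) (x : EuclideanSpace ℝ (Fin d))
    (m : MeasureTheory.Measure (EuclideanSpace ℝ (Fin d))) (θ : Param k d) :
    EuclideanSpace ℝ (Fin d) :=
  Matrix.toEuclideanLin (θ.2.2.2ᵀ * θ.2.2.1)
    (gammaAttn (β • Matrix.toEuclideanLin (θ.2.1ᵀ * θ.1) x) m)

/-- The multi-head attention velocity field `Γ(x, m, ν) = ∫ θ_Oᵀ θ_V γ(β θ_Kᵀ θ_Q x, m) dν(θ)`. -/
noncomputable def attnGamma {k d : ℕ} (β : ℝ) (x : EuclideanSpace ℝ (Fin d))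
    (m : MeasureTheory.Measure (EuclideanSpace ℝ (Fin d)))
    (ν : MeasureTheory.Measure (Param k d)) : EuclideanSpace ℝ (Fin d) :=
  ∫ θ, attnHead β x m θ ∂ν

/-- Combined Frobenius norm of the difference of two parameters: the square root of the sum
of the squared Frobenius norms of the four block differences. -/
noncomputable def paramDiffNorm {k d : ℕ} (θ ϑ : Param k d) : ℝ :=
  Real.sqrt (frobNorm (θ.1 - ϑ.1) ^ 2 + frobNorm (θ.2.1 - ϑ.2.1) ^ 2 +
    frobNorm (θ.2.2.1 - ϑ.2.2.1) ^ 2 + frobNorm (θ.2.2.2 - ϑ.2.2.2) ^ 2)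

/-!
With `N(z) = ∫ exp⟨z, y⟩ • y dm(y)` we have
`γ(z) - γ(w) = (γ₂(z) γ₂(w))⁻¹ • (γ₂(w) N(z) - γ₂(z) N(w))`, and symmetrising over `m ⊗ m`
writes twice the numerator as `∫∫ (exp(⟨z, y⟩ + ⟨w, y'⟩) - exp(⟨z, y'⟩ + ⟨w, y⟩)) • (y - y')`.
The two exponents differ by `⟨z - w, y - y'⟩`, and `|eᵃ - eᵇ| ≤ (eᵃ + eᵇ)/2 · |a - b|` (this is
`tanh u ≤ u`), so the integrand is at most
`(exp(⟨z, y⟩ + ⟨w, y'⟩) + exp(⟨z, y'⟩ + ⟨w, y⟩)) · 2R₁²‖z - w‖`, whose integral is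
`2 γ₂(z) γ₂(w) · 2R₁²‖z - w‖`. Hence `γ(·, m)` is `2R₁²`-Lipschitz, and it is bounded by `R₁`.
The head `θ_Oᵀθ_V γ(βθ_Kᵀθ_Q x, m)` is a product of factors bounded by `R₂`, `R₂` and `R₁`;
telescoping both matrix products and `a + b + c + e ≤ 2 √(a² + b² + c² + e²)` give the bound.
-/

namespace Real

theorem sinh_le_mul_cosh {u : ℝ} (hu : 0 ≤ u) : sinh u ≤ u * cosh u := by
  have hmono : MonotoneOn (fun s => s * cosh s - sinh s) (Set.Ici 0) := by
    refine monotoneOn_of_hasDerivWithinAt_nonneg (f' := fun s => s * sinh s) (convex_Ici 0)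
      (by fun_prop) (fun s _ => ?_) (fun s hs => ?_)
    · exact (((hasDerivAt_id s).mul (hasDerivAt_cosh s)).sub
        (hasDerivAt_sinh s)).hasDerivWithinAt.congr_deriv (by simp)
    · rw [interior_Ici] at hs
      exact mul_nonneg (le_of_lt hs) (sinh_nonneg_iff.2 (le_of_lt hs))
  simpa [sub_nonneg] using hmono Set.self_mem_Ici hu hu

theorem abs_sinh_le_abs_mul_cosh (u : ℝ) : |sinh u| ≤ |u| * cosh u := by
  rcases le_total 0 u with hu | hu
  · simpa [abs_of_nonneg hu, abs_of_nonneg (sinh_nonneg_iff.2 hu)] using sinh_le_mul_cosh hu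
  · simpa [abs_of_nonpos hu, abs_of_nonpos (sinh_nonpos_iff.2 hu)] using
      sinh_le_mul_cosh (neg_nonneg.2 hu)

theorem abs_exp_sub_exp_le (a b : ℝ) : |exp a - exp b| ≤ (exp a + exp b) / 2 * |a - b| := by
  set s := (a + b) / 2
  set t := (a - b) / 2
  have hsub : exp a - exp b = 2 * exp s * sinh t := by
    rw [sinh_eq, show a = s + t by ring, show b = s - t by ring, exp_add, exp_sub, exp_neg]
    field_simp
  have hadd : (exp a + exp b) / 2 = exp s * cosh t := by
    rw [cosh_eq, show a = s + t by ring, show b = s - t by ring, exp_add, exp_sub, exp_neg]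
    field_simp
  have habs : |a - b| = 2 * |t| := by rw [show a - b = 2 * t by ring, abs_mul, abs_two]
  rw [hsub, hadd, habs, abs_mul, abs_of_pos (by positivity : (0 : ℝ) < 2 * exp s)]
  calc 2 * exp s * |sinh t| ≤ 2 * exp s * (|t| * cosh t) := by
        gcongr
        exact abs_sinh_le_abs_mul_cosh t
    _ = exp s * cosh t * (2 * |t|) := by ring

end Real

theorem abs_exp_inner_cross_sub_mul_norm_sub_le {E : Type*} [NormedAddCommGroup E]
    [InnerProductSpace ℝ E] {R : ℝ} {y y' : E} (hy : ‖y‖ ≤ R) (hy' : ‖y'‖ ≤ R) (z w : E) :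
    |Real.exp ⟪z, y⟫ * Real.exp ⟪w, y'⟫ - Real.exp ⟪z, y'⟫ * Real.exp ⟪w, y⟫| * ‖y - y'‖ ≤
      (Real.exp ⟪z, y⟫ * Real.exp ⟪w, y'⟫ + Real.exp ⟪z, y'⟫ * Real.exp ⟪w, y⟫) *
        (2 * R ^ 2 * ‖z - w‖) := by
  have hR : 0 ≤ R := (norm_nonneg y).trans hy
  have hyy' : ‖y - y'‖ ≤ 2 * R := (norm_sub_le y y').trans (by linarith)
  have hexponent : |(⟪z, y⟫ + ⟪w, y'⟫) - (⟪z, y'⟫ + ⟪w, y⟫)| ≤ ‖z - w‖ * (2 * R) := by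
    have : (⟪z, y⟫ + ⟪w, y'⟫) - (⟪z, y'⟫ + ⟪w, y⟫) = ⟪z - w, y - y'⟫ := by
      simp only [inner_sub_left, inner_sub_right]
      ring
    rw [this]
    exact (abs_real_inner_le_norm _ _).trans (by gcongr)
  simp only [← Real.exp_add]
  calc _ ≤ (Real.exp (⟪z, y⟫ + ⟪w, y'⟫) + Real.exp (⟪z, y'⟫ + ⟪w, y⟫)) / 2 *
          (‖z - w‖ * (2 * R)) * (2 * R) := by
        gcongr
        exact (Real.abs_exp_sub_exp_le _ _).trans (by gcongr)
    _ = _ := by ring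

section ProdSwap

variable {α E : Type*} [MeasurableSpace α] {μ : Measure α} [SFinite μ]
  [NormedAddCommGroup E] [NormedSpace ℝ E]

theorem integral_add_comp_swap {F : α × α → E} (hF : Integrable F (μ.prod μ)) :
    ∫ p, F p + F p.swap ∂μ.prod μ = (2 : ℝ) • ∫ p, F p ∂μ.prod μ := by
  rw [integral_add hF (hF.swap : Integrable (fun p => F p.swap) _), integral_prod_swap F,
    two_smul]

theorem integral_prod_sub_smul_sub_eq {f g : α → ℝ} {y : α → E}
    (hf : Integrable f μ) (hg : Integrable g μ) (hfy : Integrable (fun a => f a • y a) μ)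
    (hgy : Integrable (fun a => g a • y a) μ) :
    ∫ p, (f p.1 * g p.2 - f p.2 * g p.1) • (y p.1 - y p.2) ∂μ.prod μ =
      (2 : ℝ) • ((∫ a, g a ∂μ) • ∫ a, f a • y a ∂μ - (∫ a, f a ∂μ) • ∫ a, g a • y a ∂μ) := by
  set Φ : α × α → E := fun p => g p.1 • (f p.2 • y p.2) - f p.1 • (g p.2 • y p.2)
  have hsymm : ∀ p : α × α,
      (f p.1 * g p.2 - f p.2 * g p.1) • (y p.1 - y p.2) = Φ p + Φ p.swap := fun p => by
    simp only [Φ, Prod.fst_swap, Prod.snd_swap]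
    module
  have hΦ : Integrable Φ (μ.prod μ) := (hg.smul_prod hfy).sub (hf.smul_prod hgy)
  simp_rw [hsymm]
  rw [integral_add_comp_swap hΦ,
    integral_sub (hg.smul_prod hfy) (hf.smul_prod hgy), integral_prod_smul g (fun a => f a • y a),
    integral_prod_smul f (fun a => g a • y a)]

end ProdSwap

section Frobenius

open scoped Matrix.Norms.Frobenius

variable {l n p : ℕ}

theorem frobNorm_eq_norm (A : Matrix (Fin l) (Fin n) ℝ) : frobNorm A = ‖A‖ := by
  rw [frobNorm, Matrix.frobenius_norm_def, Real.sqrt_eq_rpow]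
  simp only [Real.norm_eq_abs, Real.rpow_two, sq_abs]

theorem norm_toEuclideanLin_le (A : Matrix (Fin l) (Fin n) ℝ) (v : EuclideanSpace ℝ (Fin n)) :
    ‖toEuclideanLin A v‖ ≤ ‖A‖ * ‖v‖ := by
  rw [← Matrix.frobenius_norm_replicateCol (ι := Unit),
    ← Matrix.frobenius_norm_replicateCol (ι := Unit)]
  simpa [Matrix.toLpLin_apply, Matrix.replicateCol_mulVec] using
    Matrix.frobenius_norm_mul A (Matrix.replicateCol Unit v.ofLp)

theorem norm_toEuclideanLin_transpose_mul_le (A : Matrix (Fin l) (Fin n) ℝ)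
    (B : Matrix (Fin l) (Fin p) ℝ) (v : EuclideanSpace ℝ (Fin p)) :
    ‖toEuclideanLin (Aᵀ * B) v‖ ≤ ‖A‖ * ‖B‖ * ‖v‖ := by
  rw [← Matrix.frobenius_norm_transpose A]
  exact (norm_toEuclideanLin_le _ v).trans (by gcongr; exact Matrix.frobenius_norm_mul _ _)

theorem norm_toEuclideanLin_transpose_mul_sub_le {A A' : Matrix (Fin l) (Fin n) ℝ}
    {B B' : Matrix (Fin l) (Fin p) ℝ} {v v' : EuclideanSpace ℝ (Fin p)} {R r : ℝ}
    (hB : frobNorm B ≤ R) (hA' : frobNorm A' ≤ R) (hB' : frobNorm B' ≤ R) (hv : ‖v‖ ≤ r) :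
    ‖toEuclideanLin (Aᵀ * B) v - toEuclideanLin (A'ᵀ * B') v'‖ ≤
      R * r * (frobNorm (A - A') + frobNorm (B - B')) + R ^ 2 * ‖v - v'‖ := by
  simp only [frobNorm_eq_norm] at hB hA' hB' ⊢
  have hR : 0 ≤ R := (norm_nonneg B).trans hB
  have hdecomp : toEuclideanLin (Aᵀ * B) v - toEuclideanLin (A'ᵀ * B') v' =
      toEuclideanLin ((A - A')ᵀ * B) v + toEuclideanLin (A'ᵀ * (B - B')) v +
        toEuclideanLin (A'ᵀ * B') (v - v') := by
    simp only [Matrix.transpose_sub, Matrix.sub_mul, Matrix.mul_sub, map_sub, LinearMap.sub_apply]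
    abel
  rw [hdecomp]
  calc _ ≤ ‖A - A'‖ * ‖B‖ * ‖v‖ + ‖A'‖ * ‖B - B'‖ * ‖v‖ + ‖A'‖ * ‖B'‖ * ‖v - v'‖ := by
        refine (norm_add₃_le).trans ?_
        gcongr <;> exact norm_toEuclideanLin_transpose_mul_le _ _ _
    _ ≤ ‖A - A'‖ * R * r + R * ‖B - B'‖ * r + R * R * ‖v - v'‖ := by gcongr
    _ = _ := by ring

end Frobenius

theorem sum_frobNorm_sub_le_two_mul_paramDiffNorm {k d : ℕ} (θ ϑ : Param k d) :
    frobNorm (θ.1 - ϑ.1) + frobNorm (θ.2.1 - ϑ.2.1) + frobNorm (θ.2.2.1 - ϑ.2.2.1) +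
      frobNorm (θ.2.2.2 - ϑ.2.2.2) ≤ 2 * paramDiffNorm θ ϑ := by
  rw [paramDiffNorm, ← Real.sqrt_sq zero_le_two, ← Real.sqrt_mul (by positivity)]
  apply Real.le_sqrt_of_sq_le
  nlinarith [sq_nonneg (frobNorm (θ.1 - ϑ.1) - frobNorm (θ.2.1 - ϑ.2.1)),
    sq_nonneg (frobNorm (θ.1 - ϑ.1) - frobNorm (θ.2.2.1 - ϑ.2.2.1)),
    sq_nonneg (frobNorm (θ.1 - ϑ.1) - frobNorm (θ.2.2.2 - ϑ.2.2.2)),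
    sq_nonneg (frobNorm (θ.2.1 - ϑ.2.1) - frobNorm (θ.2.2.1 - ϑ.2.2.1)),
    sq_nonneg (frobNorm (θ.2.1 - ϑ.2.1) - frobNorm (θ.2.2.2 - ϑ.2.2.2)),
    sq_nonneg (frobNorm (θ.2.2.1 - ϑ.2.2.1) - frobNorm (θ.2.2.2 - ϑ.2.2.2))]

section Attention

variable {d : ℕ} {m : Measure (EuclideanSpace ℝ (Fin d))} {R : ℝ}

theorem integrable_exp_inner [IsFiniteMeasure m] (hm : ∀ᵐ y ∂m, ‖y‖ ≤ R)
    (z : EuclideanSpace ℝ (Fin d)) : Integrable (fun y => Real.exp ⟪z, y⟫) m := by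
  refine .of_bound (by fun_prop) (Real.exp (‖z‖ * R)) ?_
  filter_upwards [hm] with y hy
  rw [Real.norm_of_nonneg (Real.exp_pos _).le, Real.exp_le_exp]
  exact (real_inner_le_norm z y).trans (by gcongr)

theorem integrable_exp_inner_smul [IsFiniteMeasure m] (hm : ∀ᵐ y ∂m, ‖y‖ ≤ R)
    (z : EuclideanSpace ℝ (Fin d)) : Integrable (fun y => Real.exp ⟪z, y⟫ • y) m := by
  refine .of_bound (by fun_prop) (Real.exp (‖z‖ * R) * R) ?_
  filter_upwards [hm] with y hy
  rw [norm_smul, Real.norm_of_nonneg (Real.exp_pos _).le]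
  gcongr
  exact (real_inner_le_norm z y).trans (by gcongr)

theorem gamma2_pos_s12 [IsFiniteMeasure m] [NeZero m] (hm : ∀ᵐ y ∂m, ‖y‖ ≤ R)
    (z : EuclideanSpace ℝ (Fin d)) : 0 < gamma2 z m :=
  integral_exp_pos (integrable_exp_inner hm z)

theorem norm_gammaAttn_le [IsFiniteMeasure m] [NeZero m] (hm : ∀ᵐ y ∂m, ‖y‖ ≤ R)
    (z : EuclideanSpace ℝ (Fin d)) : ‖gammaAttn z m‖ ≤ R := by
  have hZ := gamma2_pos_s12 hm z
  have hnum : ‖∫ y, Real.exp ⟪z, y⟫ • y ∂m‖ ≤ R * gamma2 z m := by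
    rw [gamma2, ← integral_const_mul]
    refine norm_integral_le_of_norm_le ((integrable_exp_inner hm z).const_mul R) ?_
    filter_upwards [hm] with y hy
    rw [norm_smul, Real.norm_of_nonneg (Real.exp_pos _).le, mul_comm]
    gcongr
  rw [gammaAttn, norm_smul, Real.norm_of_nonneg (inv_pos.2 hZ).le, inv_mul_le_iff₀ hZ, mul_comm]
  exact hnum

theorem norm_gamma2_smul_sub_gamma2_smul_le [IsFiniteMeasure m] (hm : ∀ᵐ y ∂m, ‖y‖ ≤ R)
    (z w : EuclideanSpace ℝ (Fin d)) :
    ‖gamma2 w m • ∫ y, Real.exp ⟪z, y⟫ • y ∂m - gamma2 z m • ∫ y, Real.exp ⟪w, y⟫ • y ∂m‖ ≤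
      gamma2 z m * gamma2 w m * (2 * R ^ 2 * ‖z - w‖) := by
  have hsymm := integral_prod_sub_smul_sub_eq (integrable_exp_inner hm z)
    (integrable_exp_inner hm w) (integrable_exp_inner_smul hm z) (integrable_exp_inner_smul hm w)
  have hprod : ∀ᵐ p ∂m.prod m, ‖p.1‖ ≤ R ∧ ‖p.2‖ ≤ R :=
    (Measure.quasiMeasurePreserving_fst.ae hm).and (Measure.quasiMeasurePreserving_snd.ae hm)
  have hF := (integrable_exp_inner hm z).mul_prod (integrable_exp_inner hm w)
  have hweight : ∫ p, Real.exp ⟪z, p.1⟫ * Real.exp ⟪w, p.2⟫ + Real.exp ⟪z, p.2⟫ * Real.exp ⟪w, p.1⟫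
      ∂m.prod m = 2 * (gamma2 z m * gamma2 w m) := by
    refine (integral_add_comp_swap hF).trans ?_
    rw [integral_prod_mul (fun y => Real.exp ⟪z, y⟫) (fun y => Real.exp ⟪w, y⟫), smul_eq_mul]
    rfl
  have hint : Integrable (fun p : EuclideanSpace ℝ (Fin d) × EuclideanSpace ℝ (Fin d) =>
      (Real.exp ⟪z, p.1⟫ * Real.exp ⟪w, p.2⟫ + Real.exp ⟪z, p.2⟫ * Real.exp ⟪w, p.1⟫) *
        (2 * R ^ 2 * ‖z - w‖)) (m.prod m) :=
    (hF.add hF.swap).mul_const _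
  have hbound : ∀ᵐ p ∂m.prod m,
      ‖(Real.exp ⟪z, p.1⟫ * Real.exp ⟪w, p.2⟫ - Real.exp ⟪z, p.2⟫ * Real.exp ⟪w, p.1⟫) •
          (p.1 - p.2)‖ ≤
        (Real.exp ⟪z, p.1⟫ * Real.exp ⟪w, p.2⟫ + Real.exp ⟪z, p.2⟫ * Real.exp ⟪w, p.1⟫) *
          (2 * R ^ 2 * ‖z - w‖) := by
    filter_upwards [hprod] with p hp
    rw [norm_smul, Real.norm_eq_abs]
    exact abs_exp_inner_cross_sub_mul_norm_sub_le hp.1 hp.2 z w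
  have h2 := norm_integral_le_of_norm_le hint hbound
  rw [hsymm, integral_mul_const, hweight, norm_smul, Real.norm_two] at h2
  unfold gamma2 at h2 ⊢
  linarith

theorem gammaAttn_sub_gammaAttn_le [IsFiniteMeasure m] [NeZero m] (hm : ∀ᵐ y ∂m, ‖y‖ ≤ R)
    (z w : EuclideanSpace ℝ (Fin d)) :
    ‖gammaAttn z m - gammaAttn w m‖ ≤ 2 * R ^ 2 * ‖z - w‖ := by
  have hZ := gamma2_pos_s12 hm z
  have hW := gamma2_pos_s12 hm w
  have hsub : gammaAttn z m - gammaAttn w m = (gamma2 z m * gamma2 w m)⁻¹ •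
      (gamma2 w m • ∫ y, Real.exp ⟪z, y⟫ • y ∂m - gamma2 z m • ∫ y, Real.exp ⟪w, y⟫ • y ∂m) := by
    simp only [gammaAttn, smul_sub, smul_smul]
    congr 2 <;> field_simp
  rw [hsub, norm_smul, Real.norm_of_nonneg (by positivity), inv_mul_le_iff₀ (by positivity)]
  exact norm_gamma2_smul_sub_gamma2_smul_le hm z w

end Attention

theorem norm_attnHead_sub_le {k d : ℕ} {R₁ R₂ β : ℝ} (hβ : 0 ≤ β)
    {m : Measure (EuclideanSpace ℝ (Fin d))} [IsFiniteMeasure m] [NeZero m]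
    (hm : ∀ᵐ y ∂m, ‖y‖ ≤ R₁) {x : EuclideanSpace ℝ (Fin d)} (hx : ‖x‖ ≤ R₁) {θ ϑ : Param k d}
    (hθ : θ ∈ paramBall k d R₂) (hϑ : ϑ ∈ paramBall k d R₂) :
    ‖attnHead β x m θ - attnHead β x m ϑ‖ ≤
      R₁ * R₂ * (frobNorm (θ.2.2.1 - ϑ.2.2.1) + frobNorm (θ.2.2.2 - ϑ.2.2.2) +
        2 * β * R₁ ^ 2 * R₂ ^ 2 * (frobNorm (θ.1 - ϑ.1) + frobNorm (θ.2.1 - ϑ.2.1))) := by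
  obtain ⟨hθQ, -, hθV, -⟩ := hθ
  obtain ⟨hϑQ, hϑK, hϑV, hϑO⟩ := hϑ
  set zθ := β • toEuclideanLin (θ.2.1ᵀ * θ.1) x
  set zϑ := β • toEuclideanLin (ϑ.2.1ᵀ * ϑ.1) x
  have hz : ‖zθ - zϑ‖ ≤ β * (R₂ * R₁ * (frobNorm (θ.2.1 - ϑ.2.1) + frobNorm (θ.1 - ϑ.1))) := by
    rw [← smul_sub, norm_smul, Real.norm_of_nonneg hβ]
    gcongr
    simpa using norm_toEuclideanLin_transpose_mul_sub_le (v' := x) hθQ hϑK hϑQ hx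
  have hhead : ‖attnHead β x m θ - attnHead β x m ϑ‖ ≤
      R₂ * R₁ * (frobNorm (θ.2.2.2 - ϑ.2.2.2) + frobNorm (θ.2.2.1 - ϑ.2.2.1)) +
        R₂ ^ 2 * ‖gammaAttn zθ m - gammaAttn zϑ m‖ :=
    norm_toEuclideanLin_transpose_mul_sub_le hθV hϑO hϑV (norm_gammaAttn_le hm zθ)
  calc _ ≤ R₂ * R₁ * (frobNorm (θ.2.2.2 - ϑ.2.2.2) + frobNorm (θ.2.2.1 - ϑ.2.2.1)) +
        R₂ ^ 2 * (2 * R₁ ^ 2 * (β * (R₂ * R₁ *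
          (frobNorm (θ.2.1 - ϑ.2.1) + frobNorm (θ.1 - ϑ.1))))) :=
        hhead.trans (by gcongr; exact (gammaAttn_sub_gammaAttn_le hm zθ zϑ).trans (by gcongr))
    _ = _ := by ring

theorem stmt_12_general {k d : ℕ} (R₁ R₂ β : ℝ) (hβ : 0 < β)
    (m : Measure (EuclideanSpace ℝ (Fin d))) [IsProbabilityMeasure m]
    (hm : m (Metric.closedBall 0 R₁) = 1)
    (x : EuclideanSpace ℝ (Fin d)) (hx : x ∈ Metric.closedBall (0 : EuclideanSpace ℝ (Fin d)) R₁)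
    (θ ϑ : Param k d) (hθ : θ ∈ paramBall k d R₂) (hϑ : ϑ ∈ paramBall k d R₂) :
    ‖attnHead β x m θ - attnHead β x m ϑ‖ ≤
      2 * R₁ * R₂ * max 1 (2 * β * R₁ ^ 2 * R₂ ^ 2) * paramDiffNorm θ ϑ := by
  have hxR : ‖x‖ ≤ R₁ := mem_closedBall_zero_iff.1 hx
  have hsupp : ∀ᵐ y ∂m, ‖y‖ ≤ R₁ := by
    filter_upwards [(mem_ae_iff_prob_eq_one Metric.isClosed_closedBall.measurableSet).2 hm]
      with y hy using mem_closedBall_zero_iff.1 hy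
  have hR₁R₂ : 0 ≤ R₁ * R₂ :=
    mul_nonneg ((norm_nonneg x).trans hxR) ((Real.sqrt_nonneg _).trans hθ.1)
  have hsum := sum_frobNorm_sub_le_two_mul_paramDiffNorm θ ϑ
  set M := max 1 (2 * β * R₁ ^ 2 * R₂ ^ 2)
  set a := frobNorm (θ.1 - ϑ.1) + frobNorm (θ.2.1 - ϑ.2.1)
  set c := frobNorm (θ.2.2.1 - ϑ.2.2.1) + frobNorm (θ.2.2.2 - ϑ.2.2.2)
  have ha : 0 ≤ a := add_nonneg (Real.sqrt_nonneg _) (Real.sqrt_nonneg _)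
  have hc : 0 ≤ c := add_nonneg (Real.sqrt_nonneg _) (Real.sqrt_nonneg _)
  calc _ ≤ R₁ * R₂ * (c + 2 * β * R₁ ^ 2 * R₂ ^ 2 * a) := norm_attnHead_sub_le hβ.le hsupp hxR hθ hϑ
    _ ≤ R₁ * R₂ * (M * c + M * a) := by
        gcongr
        exacts [le_mul_of_one_le_left hc (le_max_left _ _), le_max_right _ _]
    _ ≤ R₁ * R₂ * M * (2 * paramDiffNorm θ ϑ) := by
        rw [← mul_add, ← mul_assoc]
        gcongr
        linarith
    _ = _ := by ring

/-- Lipschitz continuity of a single attention head in its parameters: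
`‖θ_Oᵀθ_V γ(βθ_Kᵀθ_Q x, m) − ϑ_Oᵀϑ_V γ(βϑ_Kᵀϑ_Q x, m)‖ ≤ 2R₁R₂ max(1, 2βR₁²R₂²) ‖θ − ϑ‖_F`. -/
theorem stmt_12 {k d : ℕ} (R₁ R₂ β : ℝ) (hR₁ : 0 < R₁) (hR₂ : 0 < R₂) (hβ : 0 < β)
    (m : Measure (EuclideanSpace ℝ (Fin d))) [IsProbabilityMeasure m]
    (hm : m (Metric.closedBall 0 R₁) = 1)
    (x : EuclideanSpace ℝ (Fin d)) (hx : x ∈ Metric.closedBall (0 : EuclideanSpace ℝ (Fin d)) R₁)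
    (θ ϑ : Param k d) (hθ : θ ∈ paramBall k d R₂) (hϑ : ϑ ∈ paramBall k d R₂) :
    ‖attnHead β x m θ - attnHead β x m ϑ‖ ≤
      2 * R₁ * R₂ * max 1 (2 * β * R₁ ^ 2 * R₂ ^ 2) * paramDiffNorm θ ϑ :=
  stmt_12_general R₁ R₂ β hβ m hm x hx θ ϑ hθ hϑ
end
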